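/- With α_i = s_{β_1}···s_{β_{i-1}}(β_i) constructed from simple roots β_1,...,β_N, for all i < j one has Σ_{k=i+1}^{j-1} ⟨α_k^∨, α_j⟩·⟨β_i^∨, β_k⟩ = -⟨α_i^∨, α_j⟩ - ⟨β_i^∨, β_j⟩. -/

import Mathlib

open RealInnerProductSpace

variable {V : Type*} [NormedAddCommGroup V] [InnerProductSpace ℝ V]

/-- The coroot pairing `⟨α^∨, x⟩ = 2 (α, x)/(α, α)`. -/
noncomputable def pairC (α x : V) : ℝ := 2 * ⟪α, x⟫ / ⟪α, α⟫

/-- The reflection in the root `α`. -/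
noncomputable def sref (α : V) (x : V) : V := x - pairC α x • α

/-- `wSeq β k = s_{β 0} ∘ ⋯ ∘ s_{β (k-1)}`. -/
noncomputable def wSeq (β : ℕ → V) : ℕ → V → V
  | 0 => id
  | k + 1 => wSeq β k ∘ sref (β k)

/-- `alphaSeq β k = s_{β 0} ⋯ s_{β (k-1)} (β k)`; in the 1-indexed notation of the paper,
`α_k = s_{β_1} ⋯ s_{β_{k-1}} (β_k)`. -/
noncomputable def alphaSeq (β : ℕ → V) (k : ℕ) : V := wSeq β k (β k)

/-- `wSeqRev β k = s_{β (k-1)} ∘ ⋯ ∘ s_{β 0}`, the word read in the opposite order. -/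
noncomputable def wSeqRev (β : ℕ → V) : ℕ → V → V
  | 0 => id
  | k + 1 => sref (β k) ∘ wSeqRev β k

/-!
Read the word `s_{β_0} ⋯ s_{β_{m-1}}` backwards on `α_j`: the vectors
`δ_m = s_{β_{m-1}} ⋯ s_{β_0} (α_j)` satisfy `δ_j = β_j` and `δ_{m+1} = s_{β_m} δ_m`, and since the
reflections are isometries, `⟨β_m^∨, δ_m⟩ = ⟨α_m^∨, α_j⟩`. Telescoping gives
`δ_{i+1} = β_j + ∑_{k=i+1}^{j-1} ⟨α_k^∨, α_j⟩ β_k`, while `δ_{i+1} = s_{β_i} δ_i` has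
`⟨β_i^∨, δ_{i+1}⟩ = -⟨α_i^∨, α_j⟩`. Pairing the expansion with `β_i^∨` gives the identity.
-/

open Finset

lemma pairC_add_right (α x y : V) : pairC α (x + y) = pairC α x + pairC α y := by
  simp only [pairC, inner_add_right, mul_add, add_div]

lemma pairC_smul_right (α : V) (c : ℝ) (x : V) : pairC α (c • x) = c * pairC α x := by
  simp only [pairC, real_inner_smul_right]
  ring

lemma pairC_sum_right {ι : Type*} (α : V) (s : Finset ι) (f : ι → V) :
    pairC α (∑ k ∈ s, f k) = ∑ k ∈ s, pairC α (f k) := by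
  simp only [pairC, inner_sum, mul_sum, sum_div]

lemma pairC_self {γ : V} (hγ : γ ≠ 0) : pairC γ γ = 2 := by
  rw [pairC, mul_div_assoc, div_self (inner_self_ne_zero.mpr hγ), mul_one]

-- For `γ = 0` both sides vanish, since then `pairC γ = 0` by the junk value of division.
lemma pairC_sref_self_right (γ x : V) : pairC γ (sref γ x) = -pairC γ x := by
  by_cases hγ : γ = 0
  · simp [hγ, pairC]
  · rw [sref, sub_eq_add_neg, ← neg_smul, pairC_add_right, pairC_smul_right, pairC_self hγ]
    ring

lemma sref_sref (γ x : V) : sref γ (sref γ x) = x := by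
  rw [sref, pairC_sref_self_right, sref, neg_smul, sub_neg_eq_add, sub_add_cancel]

lemma inner_sref_sref (γ x y : V) : ⟪sref γ x, sref γ y⟫ = ⟪x, y⟫ := by
  by_cases hγ : γ = 0
  · simp [hγ, sref, pairC]
  · have hγγ : ⟪γ, γ⟫ ≠ 0 := inner_self_ne_zero.mpr hγ
    simp only [sref, pairC, inner_sub_left, inner_sub_right, real_inner_smul_left,
      real_inner_smul_right, real_inner_comm x γ]
    field_simp
    ring

lemma pairC_sref_sref (γ x y : V) : pairC (sref γ x) (sref γ y) = pairC x y := by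
  simp only [pairC, inner_sref_sref]

lemma pairC_wSeq (β : ℕ → V) (m : ℕ) (x y : V) :
    pairC (wSeq β m x) (wSeq β m y) = pairC x y := by
  induction m generalizing x y with
  | zero => rfl
  | succ m ih => exact (ih _ _).trans (pairC_sref_sref (β m) x y)

lemma wSeq_wSeqRev (β : ℕ → V) (m : ℕ) (x : V) : wSeq β m (wSeqRev β m x) = x := by
  induction m with
  | zero => rfl
  | succ m ih =>
    change wSeq β m (sref (β m) (sref (β m) (wSeqRev β m x))) = x
    rw [sref_sref, ih]

lemma wSeqRev_wSeq (β : ℕ → V) (m : ℕ) (x : V) : wSeqRev β m (wSeq β m x) = x := by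
  induction m generalizing x with
  | zero => rfl
  | succ m ih =>
    change sref (β m) (wSeqRev β m (wSeq β m (sref (β m) x))) = x
    rw [ih, sref_sref]

lemma wSeqRev_eq_add_sum (β : ℕ → V) (x : V) {m n : ℕ} (hmn : m ≤ n) :
    wSeqRev β m x = wSeqRev β n x + ∑ k ∈ Ico m n, pairC (β k) (wSeqRev β k x) • β k := by
  have hstep : ∀ k, wSeqRev β (k + 1) x - wSeqRev β k x
      = -(pairC (β k) (wSeqRev β k x) • β k) := fun k => by
    change sref (β k) _ - _ = _
    rw [sref, sub_sub_cancel_left]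
  have htel := sum_Ico_sub (fun k => wSeqRev β k x) hmn
  simp only [hstep, sum_neg_distrib] at htel
  rw [neg_eq_iff_eq_neg, neg_sub] at htel
  rw [htel, add_sub_cancel]

lemma pairC_wSeqRev_alphaSeq (β : ℕ → V) (m j : ℕ) :
    pairC (β m) (wSeqRev β m (alphaSeq β j)) = pairC (alphaSeq β m) (alphaSeq β j) := by
  rw [← pairC_wSeq β m, wSeq_wSeqRev]
  rfl

lemma wSeqRev_alphaSeq_eq (β : ℕ → V) {m j : ℕ} (hmj : m ≤ j) :
    wSeqRev β m (alphaSeq β j)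
      = β j + ∑ k ∈ Ico m j, pairC (alphaSeq β k) (alphaSeq β j) • β k := by
  rw [wSeqRev_eq_add_sum β _ hmj, alphaSeq, wSeqRev_wSeq, ← alphaSeq]
  simp only [pairC_wSeqRev_alphaSeq]

theorem sum_pairing_middle_terms_general
    (N : ℕ) (β : ℕ → V) :
    ∀ i j, i < j → j < N →
      (∑ k ∈ Finset.Ico (i + 1) j,
          pairC (alphaSeq β k) (alphaSeq β j) * pairC (β i) (β k)) =
        -pairC (alphaSeq β i) (alphaSeq β j) - pairC (β i) (β j) := by
  intro i j hij _
  have hreflect : pairC (β i) (wSeqRev β (i + 1) (alphaSeq β j))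
      = -pairC (alphaSeq β i) (alphaSeq β j) := by
    change pairC (β i) (sref (β i) _) = _
    rw [pairC_sref_self_right, pairC_wSeqRev_alphaSeq]
  rw [wSeqRev_alphaSeq_eq β hij, pairC_add_right, pairC_sum_right] at hreflect
  simp only [pairC_smul_right] at hreflect
  linarith

/-- With `α_k = s_{β_1} ⋯ s_{β_{k-1}}(β_k)` constructed from simple
roots `β 0, …, β (N-1)` of a root system `Φ`, for all `i < j < N`:
`∑_{k=i+1}^{j-1} ⟨α_k^∨, α_j⟩ ⟨β_i^∨, β_k⟩ = -⟨α_i^∨, α_j⟩ - ⟨β_i^∨, β_j⟩`. -/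
theorem sum_pairing_middle_terms
    (Φ : Set V) (hne : ∀ α ∈ Φ, α ≠ 0) (hrefl : ∀ α ∈ Φ, ∀ γ ∈ Φ, sref α γ ∈ Φ)
    (N : ℕ) (β : ℕ → V) (hβ : ∀ i, i < N → β i ∈ Φ) :
    ∀ i j, i < j → j < N →
      (∑ k ∈ Finset.Ico (i + 1) j,
          pairC (alphaSeq β k) (alphaSeq β j) * pairC (β i) (β k)) =
        -pairC (alphaSeq β i) (alphaSeq β j) - pairC (β i) (β j) :=
  sum_pairing_middle_terms_general N β
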